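/- arXiv:1308.5399 — 4 statements merged into one kernel-verified Lean document; each statement's English description precedes it below -/
import Mathlib

section
/- The Eulerian numbers A_{k,i} of Stirling permutations satisfy the recurrence A_{k,i} = i · A_{k∖k_n, i} + (k_1 + ... + k_{n-1} + 2 - i) · A_{k∖k_n, i-1}, with A_{(k),1} = 1 and A_{k,i} = 0 if i = 0 or i > n. -/
open Finset

/-- The multiset {1^{k 0}, 2^{k 1}, ..., n^{k (n-1)}}. -/
def multisetOf (k : ℕ → ℕ) (n : ℕ) : Multiset ℕ :=
  ∑ i ∈ Finset.range n, Multiset.replicate (k i) (i + 1)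

/-- A word is a Stirling permutation: between two equal letters, all letters are ≥. -/
def IsStirlingPerm (w : List ℕ) : Prop :=
  ∀ i s j : ℕ, i < s → s < j → j < w.length →
    w.getD i 0 = w.getD j 0 → w.getD i 0 ≤ w.getD s 0

/-- Number of descents of a word: indices i (0-based, i < K-1) with w i > w (i+1),
together with the last index. -/
def descents (w : List ℕ) : ℕ :=
  ((Finset.range (w.length - 1)).filter fun i => w.getD (i + 1) 0 < w.getD i 0).card + 1

/-- Eulerian numbers A_{k,i}: number of Stirling permutations of {1^{k_1},...,n^{k_n}}
with exactly i descents. -/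
noncomputable def eulerianA (k : ℕ → ℕ) (n i : ℕ) : ℕ :=
  Nat.card {w : List ℕ //
    (↑w : Multiset ℕ) = multisetOf k n ∧ IsStirlingPerm w ∧ descents w = i}

/-- K = k_1 + ... + k_n. -/
def bigK (k : ℕ → ℕ) (n : ℕ) : ℕ := ∑ i ∈ Finset.range n, k i

/-- B_k(m): the coefficient of x^m in (∑_{i=1}^n A_{k,i} x^i)/(1-x)^{K+1}. -/
noncomputable def Bpoly (k : ℕ → ℕ) (n m : ℕ) : ℕ :=
  ∑ i ∈ Finset.Icc 1 n, eulerianA k n i * Nat.choose (bigK k n + m - i) (bigK k n)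

/-- b_k(m): the coefficient of x^m in (∑_{i=K-n+1}^{K} A_{k,K+1-i} x^i)/(1-x)^{K+1}. -/
noncomputable def bpoly (k : ℕ → ℕ) (n m : ℕ) : ℕ :=
  ∑ i ∈ Finset.Icc (bigK k n - n + 1) (bigK k n),
    eulerianA k n (bigK k n + 1 - i) * Nat.choose (bigK k n + m - i) (bigK k n)

/-!
The occurrences of the largest letter `n` in a Stirling permutation form a single block, since
everything between two of them is at least `n`. Deleting the block leaves a Stirling permutation
`σ` of `k∖k_n`, and conversely the block of `k_n` copies of `n` may be inserted into such a `σ`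
at any of its `K' + 1` positions, `K' = k_1 + ... + k_{n-1}`. Inserting it at one of the
`des σ` descent slots of `σ` (right after a descent, or at the end) keeps the number of
descents, while each of the other `K' + 1 - des σ` positions adds one; counting the pairs
(σ, position) gives the recurrence. The vanishing for `i > n` then follows by induction.
-/

open List

def descentCount : List ℕ → ℕ
  | x :: y :: t => (if y < x then 1 else 0) + descentCount (y :: t)
  | _ => 0

theorem descents_eq_descentCount_add_one (w : List ℕ) : descents w = descentCount w + 1 := by
  induction w with
  | nil => simp [descents, descentCount]
  | cons x t ih =>
    cases t with
    | nil => simp [descents, descentCount]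
    | cons y t =>
      rw [descents, Finset.card_filter] at ih ⊢
      rw [descentCount, ← add_right_cancel_iff.mp ih, length_cons, length_cons,
        Nat.add_sub_cancel, Finset.sum_range_succ']
      simp only [getD_cons_succ, getD_cons_zero, Nat.add_sub_cancel]
      ring

theorem descentCount_cons (x : ℕ) (b : List ℕ) :
    descentCount (x :: b) = descentCount b + if b.headD x < x then 1 else 0 := by
  cases b <;> simp [descentCount, add_comm]

theorem descentCount_append_cons (a : List ℕ) (x : ℕ) (b : List ℕ) :
    descentCount (a ++ x :: b) = descentCount (a ++ [x]) + descentCount (x :: b) := by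
  induction a with
  | nil => simp [descentCount]
  | cons z a ih =>
    cases a with
    | nil => simp [descentCount, add_comm]
    | cons z' a => simp only [cons_append, descentCount] at ih ⊢; omega

theorem descentCount_append_singleton (a : List ℕ) (x : ℕ) :
    descentCount (a ++ [x]) = descentCount a + if x < a.getLastD x then 1 else 0 := by
  induction a with
  | nil => simp [descentCount]
  | cons z a ih =>
    cases a with
    | nil => simp [descentCount]
    | cons z' a => simp only [cons_append, descentCount, getLastD_cons] at ih ⊢; omega

theorem descentCount_replicate (c x : ℕ) : descentCount (replicate c x) = 0 := by
  induction c with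
  | zero => rfl
  | succ c ih => rw [replicate_succ, descentCount_cons, ih]; cases c <;> simp [replicate_succ]

theorem descents_replicate (c x : ℕ) : descents (replicate c x) = 1 := by
  rw [descents_eq_descentCount_add_one, descentCount_replicate]

theorem descentCount_replicate_append {c : ℕ} (hc : 0 < c) (x : ℕ) (b : List ℕ) :
    descentCount (replicate c x ++ b) = descentCount b + if b.headD x < x then 1 else 0 := by
  obtain ⟨c, rfl⟩ := Nat.exists_eq_add_of_lt hc
  rw [zero_add, replicate_succ', append_assoc, singleton_append, descentCount_append_cons,
    ← replicate_succ', descentCount_replicate, descentCount_cons, zero_add]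

theorem descentCount_append_replicate_append {a b : List ℕ} {c n : ℕ} (hc : 0 < c)
    (ha : ∀ x ∈ a, x < n) (hb : ∀ x ∈ b, x < n) :
    descentCount (a ++ replicate c n ++ b) =
      descentCount (a ++ b) + if ∀ y ∈ b.head?, y < a.getLastD y then 0 else 1 := by
  obtain ⟨c, rfl⟩ := Nat.exists_eq_add_of_lt hc
  have hlast : ¬ n < a.getLastD n := by
    rcases mem_cons.mp (getLastD_mem_cons (l := a) (a := n)) with h | h
    · omega
    · exact (ha _ h).not_gt
  rw [zero_add, replicate_succ, append_assoc, cons_append, descentCount_append_cons,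
    ← cons_append, ← replicate_succ, descentCount_replicate_append (Nat.succ_pos c),
    descentCount_append_singleton, if_neg hlast]
  cases b with
  | nil => simp [descentCount]
  | cons y b =>
    rw [descentCount_append_cons, descentCount_append_singleton, headD_cons,
      if_pos (hb y mem_cons_self)]
    simp only [head?_cons, Option.mem_def, Option.some.injEq, forall_eq']
    split_ifs <;> omega

theorem filter_ne_append_replicate_append {α : Type*} [DecidableEq α] {a b : List α} {c : ℕ}
    {x : α} (hxa : x ∉ a) (hxb : x ∉ b) : (a ++ replicate c x ++ b).filter (· ≠ x) = a ++ b := by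
  rw [filter_append, filter_append, filter_replicate, filter_eq_self.mpr, filter_eq_self.mpr]
  · simp
  · exact fun z hz => by simpa using ne_of_mem_of_not_mem hz hxb
  · exact fun z hz => by simpa using ne_of_mem_of_not_mem hz hxa

theorem eq_of_sublist_append_replicate_append {α : Type*} {a b : List α} {c : ℕ} {x y : α}
    (hxa : x ∉ a) (hxb : x ∉ b) (h : [x, y, x] <+ a ++ replicate c x ++ b) : y = x := by
  obtain ⟨l₁, l₂, he, h₁, h₂⟩ := sublist_append_iff.mp h
  obtain ⟨l₃, l₄, rfl, h₃, h₄⟩ := sublist_append_iff.mp h₁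
  obtain rfl : l₃ = [] := by
    rcases l₃ with _ | ⟨z, l₃⟩
    · rfl
    · obtain rfl : x = z := by simpa using congrArg head? he
      exact absurd (h₃.subset mem_cons_self) hxa
  obtain rfl : l₂ = [] := by
    rcases eq_nil_or_concat l₂ with h | ⟨l, z, rfl⟩
    · exact h
    · obtain rfl : x = z := by simpa using congrArg getLast? he
      exact absurd (h₂.subset (by simp)) hxb
  simp only [nil_append, append_nil] at he
  exact eq_of_mem_replicate (h₄.subset (he ▸ by simp))

/-- Inserting a block of letters larger than those of `σ` in front of position `p ≤ σ.length`
creates a new descent exactly when `p` is not a descent slot. -/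
def descentSlots (σ : List ℕ) : Finset ℕ :=
  insert σ.length <| ((Finset.range (σ.length - 1)).filter
    fun t => σ.getD (t + 1) 0 < σ.getD t 0).map (addRightEmbedding 1)

theorem card_descentSlots (σ : List ℕ) : (descentSlots σ).card = descents σ := by
  rw [descentSlots, Finset.card_insert_of_notMem, Finset.card_map, descents]
  simp only [Finset.mem_map, Finset.mem_filter, Finset.mem_range, addRightEmbedding_apply]
  omega

theorem descentSlots_subset_range (σ : List ℕ) : descentSlots σ ⊆ Finset.range (σ.length + 1) := by
  intro p
  simp only [descentSlots, Finset.mem_insert, Finset.mem_map, Finset.mem_filter, Finset.mem_range,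
    addRightEmbedding_apply]
  omega

theorem descents_le_length_add_one (w : List ℕ) : descents w ≤ w.length + 1 := by
  simpa [card_descentSlots] using Finset.card_le_card (descentSlots_subset_range w)

theorem mem_descentSlots_iff {σ : List ℕ} {p : ℕ} (hp : p ≤ σ.length) :
    p ∈ descentSlots σ ↔ ∀ y ∈ (σ.drop p).head?, y < (σ.take p).getLastD y := by
  simp only [descentSlots, Finset.mem_insert, Finset.mem_map, Finset.mem_filter, Finset.mem_range,
    addRightEmbedding_apply, head?_drop, getLastD_eq_getLast?, getLast?_take]
  rcases hp.eq_or_lt with rfl | hlt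
  · simp
  rcases p with _ | q
  · simp [getElem?_eq_getElem hlt, hlt.ne]
  · simp [getElem?_eq_getElem hlt, getElem?_eq_getElem (Nat.lt_of_succ_lt hlt),
      getD_eq_getElem?_getD, hlt.ne]
    omega

def insertBlock (c n : ℕ) (σ : List ℕ) (p : ℕ) : List ℕ :=
  σ.take p ++ replicate c n ++ σ.drop p

theorem descents_insertBlock {σ : List ℕ} {c n p : ℕ} (hc : 0 < c) (hσ : ∀ x ∈ σ, x < n)
    (hp : p ≤ σ.length) :
    descents (insertBlock c n σ p) = descents σ + if p ∈ descentSlots σ then 0 else 1 := by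
  rw [insertBlock, descents_eq_descentCount_add_one, descentCount_append_replicate_append hc
    (fun x hx => hσ x (take_subset _ _ hx)) (fun x hx => hσ x (drop_subset _ _ hx)),
    take_append_drop, descents_eq_descentCount_add_one]
  simp only [mem_descentSlots_iff hp]
  ring

theorem card_filter_descents_insertBlock {σ : List ℕ} {c n : ℕ} (hc : 0 < c)
    (hσ : ∀ x ∈ σ, x < n) (j : ℕ) :
    ((Finset.range (σ.length + 1)).filter fun p => descents (insertBlock c n σ p) = j + 1).card =
      (if descents σ = j + 1 then j + 1 else 0) +
        if descents σ = j then σ.length + 1 - j else 0 := by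
  have hS := descentSlots_subset_range σ
  rw [Finset.filter_congr fun p hp => by
    rw [descents_insertBlock hc hσ (Nat.lt_succ_iff.mp (Finset.mem_range.mp hp))]]
  by_cases h₁ : descents σ = j + 1
  · rw [if_pos h₁, if_neg (by omega), add_zero, ← h₁, ← card_descentSlots]
    congr 1
    ext p
    by_cases h : p ∈ descentSlots σ
    · simpa [h] using hS h
    · simp [h]
  by_cases h₂ : descents σ = j
  · have hfilter : ((Finset.range (σ.length + 1)).filter
        fun p => descents σ + (if p ∈ descentSlots σ then 0 else 1) = j + 1) =
        Finset.range (σ.length + 1) \ descentSlots σ := by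
      ext p
      by_cases h : p ∈ descentSlots σ <;> simp [h, h₂]
    rw [if_neg h₁, if_pos h₂, zero_add, hfilter, Finset.card_sdiff_of_subset hS,
      Finset.card_range, card_descentSlots, h₂]
  · rw [if_neg h₁, if_neg h₂, Finset.card_eq_zero, Finset.filter_eq_empty_iff]
    intro p _
    split_ifs <;> omega

theorem coe_insertBlock (c n : ℕ) (σ : List ℕ) (p : ℕ) :
    (insertBlock c n σ p : Multiset ℕ) = σ + Multiset.replicate c n := by
  conv_rhs => rw [← take_append_drop p σ]
  rw [insertBlock, ← Multiset.coe_add, ← Multiset.coe_add, ← Multiset.coe_add,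
    Multiset.coe_replicate]
  abel

theorem filter_insertBlock {c n p : ℕ} {σ : List ℕ} (hσ : n ∉ σ) :
    (insertBlock c n σ p).filter (· ≠ n) = σ := by
  rw [insertBlock, filter_ne_append_replicate_append (fun h => hσ (take_subset _ _ h))
    (fun h => hσ (drop_subset _ _ h)), take_append_drop]

theorem idxOf_insertBlock {c n p : ℕ} {σ : List ℕ} (hc : 0 < c) (hσ : n ∉ σ)
    (hp : p ≤ σ.length) : (insertBlock c n σ p).idxOf n = p := by
  obtain ⟨c, rfl⟩ := Nat.exists_eq_add_of_lt hc
  rw [insertBlock, append_assoc, idxOf_append_of_notMem (fun h => hσ (take_subset _ _ h)),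
    zero_add, replicate_succ, cons_append, idxOf_cons_self, length_take, min_eq_left hp,
    add_zero]

theorem insertBlock_injOn {c n : ℕ} (hc : 0 < c) :
    Set.InjOn (fun x : List ℕ × ℕ => insertBlock c n x.1 x.2) {x | n ∉ x.1 ∧ x.2 ≤ x.1.length} := by
  rintro ⟨σ, p⟩ ⟨hσ, hp⟩ ⟨τ, q⟩ ⟨hτ, hq⟩ h
  simp only at hσ hp hτ hq h
  have hidx := congrArg (idxOf n) h
  have hfilter := congrArg (List.filter (· ≠ n)) h
  rw [idxOf_insertBlock hc hσ hp, idxOf_insertBlock hc hτ hq] at hidx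
  rw [filter_insertBlock hσ, filter_insertBlock hτ] at hfilter
  rw [hidx, hfilter]

theorem isStirlingPerm_iff_sublist {w : List ℕ} :
    IsStirlingPerm w ↔ ∀ x y, [x, y, x] <+ w → x ≤ y := by
  rw [IsStirlingPerm]
  constructor
  · intro hw x y hsub
    obtain ⟨f, hf⟩ := sublist_iff_exists_fin_orderEmbedding_get_eq.mp hsub
    have h0 := hf 0
    have h1 := hf 1
    have h2 := hf 2
    simp only [get_eq_getElem] at h0 h1 h2
    have := hw (f 0) (f 1) (f 2) (f.strictMono (by simp)) (f.strictMono (by simp [Fin.lt_def]))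
      (f 2).isLt
    simp only [getD_eq_getElem _ _ (f _).isLt, ← h0, ← h1, ← h2] at this
    exact this rfl
  · intro h i s j his hsj hjl heq
    have hsub : [w.getD i 0, w.getD s 0, w.getD j 0] <+ w := by
      rw [sublist_iff_exists_fin_orderEmbedding_get_eq]
      refine ⟨OrderEmbedding.ofStrictMono ![⟨i, by omega⟩, ⟨s, by omega⟩, ⟨j, hjl⟩] ?_, ?_⟩
      · rw [Fin.strictMono_iff_lt_succ]
        intro t
        fin_cases t <;> simpa
      · intro t
        have : i < w.length ∧ s < w.length := by omega
        fin_cases t <;> simp [this, hjl]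
    exact h _ _ (heq ▸ hsub)

theorem IsStirlingPerm.sublist {w w' : List ℕ} (hw : IsStirlingPerm w) (h : w' <+ w) :
    IsStirlingPerm w' :=
  isStirlingPerm_iff_sublist.mpr fun x y hxy => isStirlingPerm_iff_sublist.mp hw x y (hxy.trans h)

theorem isStirlingPerm_replicate (c x : ℕ) : IsStirlingPerm (replicate c x) :=
  isStirlingPerm_iff_sublist.mpr fun a b h => by
    rw [eq_of_mem_replicate (h.subset (by simp : a ∈ [a, b, a])),
      eq_of_mem_replicate (h.subset (by simp : b ∈ [a, b, a]))]

theorem IsStirlingPerm.append_replicate_append {a b : List ℕ} {c n : ℕ}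
    (h : IsStirlingPerm (a ++ b)) (hlt : ∀ x ∈ a ++ b, x < n) :
    IsStirlingPerm (a ++ replicate c n ++ b) := by
  have hna : n ∉ a := fun hn => (hlt n (mem_append_left b hn)).false
  have hnb : n ∉ b := fun hn => (hlt n (mem_append_right a hn)).false
  rw [isStirlingPerm_iff_sublist] at h ⊢
  intro x y hsub
  by_cases hy : y = n
  · have hx := hsub.subset (mem_cons_self (a := x))
    simp only [mem_append, mem_replicate] at hx
    rcases hx with (hx | hx) | hx
    · exact hy ▸ (hlt x (mem_append_left b hx)).le
    · exact hy ▸ hx.2.le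
    · exact hy ▸ (hlt x (mem_append_right a hx)).le
  by_cases hx : x = n
  · subst hx
    exact absurd (eq_of_sublist_append_replicate_append hna hnb hsub) hy
  have hsub' := hsub.filter (· ≠ n)
  rw [filter_ne_append_replicate_append hna hnb] at hsub'
  exact h x y (by simpa [hx, hy] using hsub')

theorem IsStirlingPerm.exists_eq_append_replicate_append {w : List ℕ} {n : ℕ}
    (hw : IsStirlingPerm w) (hmax : ∀ x ∈ w, x ≤ n) :
    ∃ a b, w = a ++ replicate (w.count n) n ++ b ∧ n ∉ a ∧ n ∉ b := by
  induction w with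
  | nil => exact ⟨[], [], by simp, not_mem_nil, not_mem_nil⟩
  | cons x t ih =>
    obtain ⟨a, b, ht, hna, hnb⟩ :=
      ih (hw.sublist (sublist_cons_self x _)) fun z hz => hmax z (mem_cons_of_mem x hz)
    by_cases hx : x = n
    · subst hx
      rw [count_cons_self]
      generalize t.count x = c at ht ⊢
      subst ht
      rcases a with _ | ⟨y, a⟩
      · exact ⟨[], b, by simp [replicate_succ], hna, hnb⟩
      rcases c.eq_zero_or_pos with rfl | hc
      · exact ⟨[], y :: a ++ b, by simp, not_mem_nil, by simp_all⟩
      have hyx : y ≠ x := fun h => hna (h ▸ mem_cons_self)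
      have hsub : [x, y, x] <+ x :: (y :: a ++ replicate c x ++ b) :=
        .cons_cons x <| .cons_cons y <| singleton_sublist.mpr (by simp [hc.ne'])
      have := isStirlingPerm_iff_sublist.mp hw x y hsub
      exact absurd (le_antisymm (hmax y (by simp)) this) hyx
    · rw [count_cons_of_ne hx]
      generalize t.count n = c at ht ⊢
      subst ht
      exact ⟨x :: a, b, rfl, by simp [Ne.symm hx, hna], hnb⟩

theorem multisetOf_succ (k : ℕ → ℕ) (m : ℕ) :
    multisetOf k (m + 1) = multisetOf k m + Multiset.replicate (k m) (m + 1) :=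
  Finset.sum_range_succ _ _

theorem le_of_mem_multisetOf {k : ℕ → ℕ} {n x : ℕ} (hx : x ∈ multisetOf k n) : x ≤ n := by
  obtain ⟨i, hi, hx⟩ := Multiset.mem_sum.mp hx
  rw [Multiset.eq_of_mem_replicate hx]
  exact Finset.mem_range.mp hi

theorem card_multisetOf (k : ℕ → ℕ) (n : ℕ) : Multiset.card (multisetOf k n) = bigK k n := by
  simp [multisetOf, bigK, Multiset.card_sum]

theorem count_multisetOf_succ (k : ℕ → ℕ) (m : ℕ) :
    (multisetOf k (m + 1)).count (m + 1) = k m := by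
  rw [multisetOf_succ, Multiset.count_add, Multiset.count_replicate_self,
    Multiset.count_eq_zero.mpr fun h => (le_of_mem_multisetOf h).not_gt (lt_add_one m), zero_add]

open Classical in
noncomputable def stirlingPerms (k : ℕ → ℕ) (n : ℕ) : Finset (List ℕ) :=
  (multisetOf k n).lists.toFinset.filter IsStirlingPerm

theorem mem_stirlingPerms {k : ℕ → ℕ} {n : ℕ} {w : List ℕ} :
    w ∈ stirlingPerms k n ↔ (w : Multiset ℕ) = multisetOf k n ∧ IsStirlingPerm w := by
  simp [stirlingPerms, eq_comm]

theorem eulerianA_eq_card (k : ℕ → ℕ) (n i : ℕ) :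
    eulerianA k n i = ((stirlingPerms k n).filter (descents · = i)).card := by
  rw [eulerianA, ← Nat.card_eq_finsetCard]
  exact Nat.card_congr <| Equiv.subtypeEquivRight fun w => by
    simp [mem_stirlingPerms, and_assoc]

theorem length_of_mem_stirlingPerms {k : ℕ → ℕ} {n : ℕ} {w : List ℕ}
    (hw : w ∈ stirlingPerms k n) : w.length = bigK k n := by
  rw [← card_multisetOf, ← (mem_stirlingPerms.mp hw).1, Multiset.coe_card]

theorem le_of_mem_of_mem_stirlingPerms {k : ℕ → ℕ} {n x : ℕ} {w : List ℕ}
    (hw : w ∈ stirlingPerms k n) (hx : x ∈ w) : x ≤ n :=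
  le_of_mem_multisetOf ((mem_stirlingPerms.mp hw).1 ▸ Multiset.mem_coe.mpr hx)

theorem stirlingPerms_one (k : ℕ → ℕ) : stirlingPerms k 1 = {replicate (k 0) 1} := by
  ext w
  rw [mem_stirlingPerms, Finset.mem_singleton, multisetOf, Finset.sum_range_one,
    ← Multiset.coe_replicate, Multiset.coe_eq_coe, perm_replicate]
  exact ⟨And.left, fun h => ⟨h, h ▸ isStirlingPerm_replicate _ _⟩⟩

theorem stirlingPerms_succ (k : ℕ → ℕ) (m : ℕ) :
    stirlingPerms k (m + 1) = (stirlingPerms k m ×ˢ Finset.range (bigK k m + 1)).image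
      fun x => insertBlock (k m) (m + 1) x.1 x.2 := by
  ext w
  simp only [Finset.mem_image, Finset.mem_product, Finset.mem_range, Prod.exists]
  constructor
  · intro hw
    obtain ⟨hwM, hwS⟩ := mem_stirlingPerms.mp hw
    obtain ⟨a, b, hab, -, -⟩ := hwS.exists_eq_append_replicate_append
      fun x hx => le_of_mem_multisetOf (hwM ▸ Multiset.mem_coe.mpr hx)
    rw [← Multiset.coe_count, hwM, count_multisetOf_succ] at hab
    have hins : insertBlock (k m) (m + 1) (a ++ b) a.length = w := by
      rw [insertBlock, take_left, drop_left, hab]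
    have hσ : a ++ b ∈ stirlingPerms k m := by
      refine mem_stirlingPerms.mpr ⟨?_, hwS.sublist ?_⟩
      · rw [← hins, coe_insertBlock, multisetOf_succ] at hwM
        exact add_right_cancel hwM
      · rw [hab]
        exact (sublist_append_left a _).append (Sublist.refl b)
    refine ⟨a ++ b, a.length, ⟨hσ, ?_⟩, hins⟩
    rw [← length_of_mem_stirlingPerms hσ, length_append]
    omega
  · rintro ⟨σ, p, ⟨hσ, hp⟩, rfl⟩
    obtain ⟨hσM, hσS⟩ := mem_stirlingPerms.mp hσ
    refine mem_stirlingPerms.mpr ⟨by rw [coe_insertBlock, hσM, multisetOf_succ], ?_⟩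
    refine IsStirlingPerm.append_replicate_append (by rwa [take_append_drop]) fun x hx => ?_
    rw [take_append_drop] at hx
    exact Nat.lt_succ_of_le (le_of_mem_of_mem_stirlingPerms hσ hx)

theorem eulerianA_succ {k : ℕ → ℕ} {m : ℕ} (hk : 0 < k m) (j : ℕ) :
    eulerianA k (m + 1) (j + 1) =
      (j + 1) * eulerianA k m (j + 1) + (bigK k m + 1 - j) * eulerianA k m j := by
  have hlt : ∀ σ ∈ stirlingPerms k m, ∀ x ∈ σ, x < m + 1 := fun σ hσ x hx =>
    Nat.lt_succ_of_le (le_of_mem_of_mem_stirlingPerms hσ hx)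
  have hinj : Set.InjOn (fun x : List ℕ × ℕ => insertBlock (k m) (m + 1) x.1 x.2)
      (stirlingPerms k m ×ˢ Finset.range (bigK k m + 1) : Finset _) := by
    refine (insertBlock_injOn hk).mono fun x hx => ?_
    obtain ⟨hσ, hp⟩ := Finset.mem_product.mp hx
    exact ⟨fun h => (hlt _ hσ _ h).false,
      length_of_mem_stirlingPerms hσ ▸ Nat.lt_succ_iff.mp (Finset.mem_range.mp hp)⟩
  calc eulerianA k (m + 1) (j + 1)
      = ∑ σ ∈ stirlingPerms k m, ((Finset.range (bigK k m + 1)).filter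
          fun p => descents (insertBlock (k m) (m + 1) σ p) = j + 1).card := by
        rw [eulerianA_eq_card, stirlingPerms_succ, Finset.filter_image,
          Finset.card_image_of_injOn (hinj.mono (Finset.filter_subset _ _)), Finset.card_filter,
          Finset.sum_product]
        simp only [Finset.card_filter]
    _ = ∑ σ ∈ stirlingPerms k m, ((if descents σ = j + 1 then j + 1 else 0) +
          if descents σ = j then bigK k m + 1 - j else 0) :=
        Finset.sum_congr rfl fun σ hσ => by
          rw [← length_of_mem_stirlingPerms hσ]
          exact card_filter_descents_insertBlock hk (hlt σ hσ) j
    _ = (j + 1) * eulerianA k m (j + 1) + (bigK k m + 1 - j) * eulerianA k m j := by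
        rw [Finset.sum_add_distrib, ← Finset.sum_filter, ← Finset.sum_filter, Finset.sum_const,
          Finset.sum_const, smul_eq_mul, smul_eq_mul, eulerianA_eq_card, eulerianA_eq_card]
        ring

theorem eulerianA_zero (k : ℕ → ℕ) (n : ℕ) : eulerianA k n 0 = 0 := by
  rw [eulerianA_eq_card, Finset.card_eq_zero, Finset.filter_eq_empty_iff]
  intro w _
  simp [descents]

theorem eulerianA_one (k : ℕ → ℕ) (i : ℕ) : eulerianA k 1 i = if i = 1 then 1 else 0 := by
  rw [eulerianA_eq_card, stirlingPerms_one, Finset.filter_singleton, descents_replicate]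
  split_ifs <;> simp_all [eq_comm]

theorem eulerianA_eq_zero_of_bigK_add_one_lt {k : ℕ → ℕ} {n i : ℕ} (hi : bigK k n + 1 < i) :
    eulerianA k n i = 0 := by
  rw [eulerianA_eq_card, Finset.card_eq_zero, Finset.filter_eq_empty_iff]
  intro w hw
  have := descents_le_length_add_one w
  rw [length_of_mem_stirlingPerms hw] at this
  omega

theorem eulerianA_eq_zero_of_lt {k : ℕ → ℕ} (hk : ∀ i, 0 < k i) {n i : ℕ} (hn : 1 ≤ n)
    (hi : n < i) : eulerianA k n i = 0 := by
  induction n, hn using Nat.le_induction generalizing i with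
  | base => rw [eulerianA_one, if_neg hi.ne']
  | succ m _ ih =>
    obtain ⟨j, rfl⟩ : ∃ j, i = j + 1 := ⟨i - 1, by omega⟩
    rw [eulerianA_succ (hk m), ih (by omega), ih (by omega), mul_zero, mul_zero, add_zero]

/-- Recurrence for the Eulerian numbers of Stirling permutations:
A_{k,i} = i·A_{k∖k_n,i} + (k_1+...+k_{n-1}+2-i)·A_{k∖k_n,i-1}, with
A_{(k),1} = 1 and A_{k,i} = 0 if i = 0 or i > n. -/
theorem eulerianA_recurrence (k : ℕ → ℕ) (hk : ∀ i, 1 ≤ k i) :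
    (∀ n, eulerianA k n 0 = 0) ∧
    (∀ n i, 1 ≤ n → n < i → eulerianA k n i = 0) ∧
    (eulerianA k 1 1 = 1) ∧
    (∀ n i, 2 ≤ n → 1 ≤ i →
      (eulerianA k n i : ℤ) =
        (i : ℤ) * eulerianA k (n - 1) i +
          ((∑ j ∈ Finset.range (n - 1), (k j : ℤ)) + 2 - i) * eulerianA k (n - 1) (i - 1)) := by
  refine ⟨eulerianA_zero k, fun n i hn hi => eulerianA_eq_zero_of_lt hk hn hi,
    by rw [eulerianA_one, if_pos rfl], fun n i hn hi => ?_⟩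
  obtain ⟨m, rfl⟩ : ∃ m, n = m + 1 := ⟨n - 1, by omega⟩
  obtain ⟨j, rfl⟩ : ∃ j, i = j + 1 := ⟨i - 1, by omega⟩
  have hK : ∑ j ∈ Finset.range m, (k j : ℤ) = bigK k m := by simp [bigK]
  rw [eulerianA_succ (hk m), Nat.add_sub_cancel, Nat.add_sub_cancel, hK]
  rcases le_or_gt j (bigK k m + 1) with hj | hj
  · push_cast [Nat.cast_sub hj]
    ring
  · -- the coefficient `bigK k m + 1 - j` is truncated in `ℕ`, but it multiplies zero
    rw [eulerianA_eq_zero_of_bigK_add_one_lt hj]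
    push_cast
    ring
end

section
/- For all nonnegative integers n and positive integers m with m > n, Σ_{1 ≤ i_1 < i_2 < ... < i_n < m} i_1² · i_2 · i_3 ⋯ i_n = s_odd(m, m - n), where s_odd satisfies s_odd(n,k) = s_odd(n-1,k-1) + (n-1)·s_odd(n-1,k) for n > k, s_odd(n,n) = n, and s_odd(n,k) = 0 for n < k. -/
/-- Stirling numbers of odd type of the second kind:
S_odd(n,k) = S_odd(n-1,k-1) + k·S_odd(n-1,k) + δ_{n,k}, S_odd(0,0) = 0,
S_odd(n,k) = 0 for n < k. -/
def Sodd : ℕ → ℕ → ℕ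
  | 0, _ => 0
  | _ + 1, 0 => 0
  | n + 1, k + 1 => Sodd n k + (k + 1) * Sodd n (k + 1) + if n = k then 1 else 0

/-- Stirling numbers of odd type of the first kind:
s_odd(n,k) = s_odd(n-1,k-1) + (n-1)·s_odd(n-1,k) + δ_{n,k}, s_odd(0,0) = 0,
s_odd(n,k) = 0 for n < k. -/
def sodd : ℕ → ℕ → ℕ
  | 0, _ => 0
  | n + 1, 0 => n * sodd n 0
  | n + 1, k + 1 => sodd n k + n * sodd n (k + 1) + if n = k then 1 else 0

open scoped Classical

lemma sodd_zero (n : ℕ) : sodd n 0 = 0 := by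
  induction n with
  | zero => simp [sodd]
  | succ k ih => simp [sodd, ih]

lemma sodd_eq_zero : ∀ n k : ℕ, n < k → sodd n k = 0 := by
  intro n
  induction n with
  | zero => intro k _; simp [sodd]
  | succ m ih =>
    intro k hk
    obtain ⟨k', rfl⟩ : ∃ k', k = k' + 1 := ⟨k - 1, by omega⟩
    have h1 : m < k' := by omega
    simp [sodd, ih k' h1, ih (k' + 1) (by omega), Nat.ne_of_lt h1]

lemma sodd_self (n : ℕ) : sodd n n = n := by
  induction n with
  | zero => simp [sodd]
  | succ k ih => simp [sodd, ih, sodd_eq_zero k (k + 1) (by omega)]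

/-- The summand. -/
def Pfun (n N : ℕ) (f : Fin n → Fin N) : ℕ :=
  ∏ j : Fin n, ((f j : ℕ) + 1) ^ (if (j : ℕ) = 0 then 2 else 1)

/-- The sum over strictly monotone tuples. -/
noncomputable def S (n N : ℕ) : ℕ :=
  ∑ f : {f : Fin n → Fin N // StrictMono f}, Pfun n N f.1

lemma S_zero (N : ℕ) : S 0 N = 1 := by
  haveI : Unique {f : Fin 0 → Fin N // StrictMono f} :=
    { default := ⟨Fin.elim0, fun i => i.elim0⟩
      uniq := fun f => Subtype.ext (funext fun i => i.elim0) }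
  simp [S, Pfun]

lemma S_of_lt {n N : ℕ} (h : N < n) : S n N = 0 := by
  haveI : IsEmpty {f : Fin n → Fin N // StrictMono f} := by
    constructor
    intro f
    have := Fintype.card_le_of_injective f.1 f.2.injective
    simp only [Fintype.card_fin] at this
    omega
  simp [S]

section Split

variable {n N : ℕ}

/-- Lift a strictly monotone tuple along `Fin.castSucc` on the codomain. -/
def liftFun (f : {f : Fin n → Fin N // StrictMono f}) :
    {f : Fin n → Fin (N + 1) // StrictMono f} :=
  ⟨fun j => (f.1 j).castSucc, fun a b hab => Fin.castSucc_lt_castSucc_iff.mpr (f.2 hab)⟩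

/-- Append the top element `Fin.last N` to a strictly monotone tuple. -/
def snocFun (g : {f : Fin n → Fin N // StrictMono f}) :
    {f : Fin (n + 1) → Fin (N + 1) // StrictMono f} :=
  ⟨Fin.snoc (fun j => (g.1 j).castSucc) (Fin.last N), by
    intro a b hab
    rcases Fin.eq_castSucc_or_eq_last b with ⟨b', rfl⟩ | rfl
    · rcases Fin.eq_castSucc_or_eq_last a with ⟨a', rfl⟩ | rfl
      · rw [Fin.snoc_castSucc, Fin.snoc_castSucc]
        exact Fin.castSucc_lt_castSucc_iff.mpr (g.2 (Fin.castSucc_lt_castSucc_iff.mp hab))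
      · exact absurd hab (Fin.castSucc_lt_last b').asymm
    · rcases Fin.eq_castSucc_or_eq_last a with ⟨a', rfl⟩ | rfl
      · rw [Fin.snoc_castSucc, Fin.snoc_last]
        exact Fin.castSucc_lt_last _
      · exact absurd hab (lt_irrefl _)⟩

lemma top_lt {f : {f : Fin (n + 1) → Fin (N + 1) // StrictMono f}}
    (h : ¬ f.1 (Fin.last n) = Fin.last N) (j : Fin (n + 1)) : (f.1 j : ℕ) < N := by
  have ha : (f.1 j : ℕ) ≤ (f.1 (Fin.last n) : ℕ) := f.2.monotone (Fin.le_last j)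
  have hb : (f.1 (Fin.last n) : ℕ) < N := Fin.val_lt_last h
  omega

lemma mid_lt {f : {f : Fin (n + 1) → Fin (N + 1) // StrictMono f}}
    (h : f.1 (Fin.last n) = Fin.last N) (j : Fin n) : (f.1 j.castSucc : ℕ) < N := by
  have ha : f.1 j.castSucc < f.1 (Fin.last n) := f.2 (Fin.castSucc_lt_last j)
  rw [h] at ha
  exact ha

/-- The inverse of the splitting. -/
noncomputable def unsplitFun (f : {f : Fin (n + 1) → Fin (N + 1) // StrictMono f}) :
    {f : Fin (n + 1) → Fin N // StrictMono f} ⊕ {f : Fin n → Fin N // StrictMono f} :=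
  if h : f.1 (Fin.last n) = Fin.last N then
    Sum.inr ⟨fun j => (f.1 j.castSucc).castLT (mid_lt h j),
      fun a b hab => f.2 (Fin.castSucc_lt_castSucc_iff.mpr hab)⟩
  else
    Sum.inl ⟨fun j => (f.1 j).castLT (top_lt h j), fun a b hab => f.2 hab⟩

lemma liftFun_last (f : {f : Fin (n + 1) → Fin N // StrictMono f}) :
    ¬ (liftFun f).1 (Fin.last n) = Fin.last N := (Fin.castSucc_lt_last _).ne

lemma snocFun_last (g : {f : Fin n → Fin N // StrictMono f}) :
    (snocFun g).1 (Fin.last n) = Fin.last N := by simp [snocFun]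

lemma snocFun_castSucc (g : {f : Fin n → Fin N // StrictMono f}) (j : Fin n) :
    (snocFun g).1 j.castSucc = (g.1 j).castSucc := by simp [snocFun]

/-- Splitting strictly monotone tuples into `Fin (N+1)` according to whether the top
element is attained. -/
noncomputable def splitEquiv (n N : ℕ) :
    {f : Fin (n + 1) → Fin N // StrictMono f} ⊕ {f : Fin n → Fin N // StrictMono f}
      ≃ {f : Fin (n + 1) → Fin (N + 1) // StrictMono f} where
  toFun := Sum.elim liftFun snocFun
  invFun := unsplitFun
  left_inv x := by
    rcases x with f | g
    · rw [Sum.elim_inl, unsplitFun, dif_neg (liftFun_last f)]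
      exact congrArg Sum.inl (Subtype.ext (funext fun j => Fin.castLT_castSucc _ _))
    · rw [Sum.elim_inr, unsplitFun, dif_pos (snocFun_last g)]
      refine congrArg Sum.inr (Subtype.ext (funext fun j => ?_))
      exact Fin.ext (by rw [Fin.coe_castLT, snocFun_castSucc, Fin.coe_castSucc])
  right_inv f := by
    by_cases h : f.1 (Fin.last n) = Fin.last N
    · rw [unsplitFun, dif_pos h, Sum.elim_inr]
      refine Subtype.ext (funext fun j => ?_)
      rcases Fin.eq_castSucc_or_eq_last j with ⟨j', rfl⟩ | rfl
      · exact (snocFun_castSucc _ j').trans (Fin.castSucc_castLT _ _)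
      · exact (snocFun_last _).trans h.symm
    · rw [unsplitFun, dif_neg h, Sum.elim_inl]
      exact Subtype.ext (funext fun j => Fin.castSucc_castLT _ _)

lemma Pfun_lift (f : {f : Fin n → Fin N // StrictMono f}) :
    Pfun n (N + 1) (liftFun f).1 = Pfun n N f.1 := by
  simp [Pfun, liftFun]

lemma Pfun_snoc (g : {f : Fin n → Fin N // StrictMono f}) :
    Pfun (n + 1) (N + 1) (snocFun g).1
      = (N + 1) ^ (if n = 0 then 2 else 1) * Pfun n N g.1 := by
  rw [Pfun, Fin.prod_univ_castSucc]
  have h1 : ∀ j : Fin n,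
      (((snocFun g).1 j.castSucc : ℕ) + 1) ^ (if ((j.castSucc : Fin (n + 1)) : ℕ) = 0 then 2 else 1)
        = ((g.1 j : ℕ) + 1) ^ (if (j : ℕ) = 0 then 2 else 1) := fun j => by
    rw [snocFun_castSucc, Fin.coe_castSucc, Fin.coe_castSucc]
  have h2 : (((snocFun g).1 (Fin.last n) : ℕ) + 1)
        ^ (if ((Fin.last n : Fin (n + 1)) : ℕ) = 0 then 2 else 1)
      = (N + 1) ^ (if n = 0 then 2 else 1) := by
    rw [snocFun_last, Fin.val_last, Fin.val_last]
  rw [Finset.prod_congr rfl (fun j _ => h1 j), h2, mul_comm, Pfun]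

end Split

lemma S_rec (n N : ℕ) :
    S (n + 1) (N + 1) = S (n + 1) N + (N + 1) ^ (if n = 0 then 2 else 1) * S n N := by
  rw [S, ← Equiv.sum_comp (splitEquiv n N) (fun f => Pfun (n + 1) (N + 1) f.1),
    Fintype.sum_sum_type]
  simp only [splitEquiv, Equiv.coe_fn_mk, Sum.elim_inl, Sum.elim_inr]
  have e1 : S (n + 1) N
      = ∑ f : {f : Fin (n + 1) → Fin N // StrictMono f}, Pfun (n + 1) N f.1 := rfl
  have e2 : S n N = ∑ f : {f : Fin n → Fin N // StrictMono f}, Pfun n N f.1 := rfl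
  rw [e1, e2, Finset.mul_sum]
  exact congrArg₂ (· + ·) (Finset.sum_congr rfl fun f _ => Pfun_lift f)
    (Finset.sum_congr rfl fun g _ => Pfun_snoc g)

lemma key : ∀ M n : ℕ, 1 ≤ n → n ≤ M → S n M = sodd (M + 1) (M + 1 - n) := by
  intro M
  induction M with
  | zero => intro n h1 h2; omega
  | succ M ih =>
    intro n h1 h2
    obtain ⟨k, rfl⟩ : ∃ k, n = k + 1 := ⟨n - 1, by omega⟩
    rw [S_rec k M]
    have hsub1 : M + 1 + 1 - (k + 1) = (M - k) + 1 := by omega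
    rw [hsub1]
    have hrhs : sodd (M + 1 + 1) ((M - k) + 1)
        = sodd (M + 1) (M - k) + (M + 1) * sodd (M + 1) (M - k + 1) := by
      show sodd ((M + 1) + 1) ((M - k) + 1) = _
      rw [sodd]
      have : ¬ (M + 1 = M - k) := by omega
      simp [this]
    rw [hrhs]
    have hterm1 : S (k + 1) M = sodd (M + 1) (M - k) := by
      rcases Nat.lt_or_ge k M with h | h
      · rw [ih (k + 1) (by omega) (by omega)]
        congr 1
        omega
      · have hk : k = M := by omega
        subst hk
        rw [S_of_lt (by omega)]
        simp [sodd_zero]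
    have hterm2 : (M + 1) ^ (if k = 0 then 2 else 1) * S k M
        = (M + 1) * sodd (M + 1) (M - k + 1) := by
      rcases Nat.eq_zero_or_pos k with hk | hk
      · subst hk
        simp [S_zero, sodd_self, pow_two]
      · have hkk : ¬ (k = 0) := by omega
        rw [if_neg hkk, pow_one, ih k (by omega) (by omega)]
        congr 2
        omega
    rw [hterm1, hterm2]

/-- ∑_{1 ≤ i_1 < ... < i_n < m} i_1² i_2 ⋯ i_n = s_odd(m, m-n). -/
theorem sum_strictMono_eq_sodd (n m : ℕ) (hn : 1 ≤ n) (hnm : n < m) :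
    ∑ f : {f : Fin n → Fin (m - 1) // StrictMono f},
      ∏ j : Fin n, ((f.1 j : ℕ) + 1) ^ (if (j : ℕ) = 0 then 2 else 1) =
    sodd m (m - n) := by
  obtain ⟨M, rfl⟩ : ∃ M, m = M + 1 := ⟨m - 1, by omega⟩
  have h := key M n hn (by omega)
  simpa [S, Pfun] using h
end

section
/- s_odd(n, k) equals the number of pairs (ℓ, σ) where σ is a permutation of {1,...,n} with exactly k cycles σ^(1),...,σ^(k) ordered so that min(σ^(1)) < ... < min(σ^(k)), and ℓ ∈ {1,...,n} satisfies min(σ^(ℓ)) = ℓ. -/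
open scoped Classical

/-- The set of cycle minima of a permutation of Fin n. -/
noncomputable def cycleMins (n : ℕ) (σ : Equiv.Perm (Fin n)) : Finset (Fin n) :=
  Finset.univ.filter fun x => ∀ y, σ.SameCycle x y → x ≤ y

open Equiv Equiv.Perm Finset

/-!
Say that `ℓ` leads `σ` when `0, …, ℓ - 1` are all cycle minima of `σ`. Cutting `last n` out of
its cycle is a bijection `Perm (Fin (n + 1)) ≃ Fin (n + 1) × Perm (Fin n)`, `σ ↦ (σ (last n), e)`.
It keeps the cycle minima below `last n`, and `last n` is a cycle minimum exactly when `σ` fixes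
it. So for `ℓ ≤ n` the permutations of `Fin (n + 1)` with `k + 1` cycles led by `ℓ` are as many
as the permutations of `Fin n` with `k` cycles led by `ℓ`, plus `n` times those with `k + 1`
cycles, while `ℓ = n + 1` leads only the identity. Summing over `ℓ` gives the recurrence of
`sodd`.
-/

theorem Nat.nth_eq_self_iff {p : ℕ → Prop} (hf : (Set.ofPred p).Finite) {i : ℕ}
    (hi : i < #hf.toFinset) : Nat.nth p i = i ↔ ∀ m ≤ i, p m := by
  constructor
  · intro h m hm
    have hpi : p i := h ▸ Nat.nth_mem_of_lt_card hf hi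
    have hcount : Nat.count p i = i := by
      simpa [h] using Nat.count_nth_of_lt_card_finite hf hi
    rcases hm.lt_or_eq with hm | rfl
    · exact Nat.count_iff_forall.mp hcount m hm
    · exact hpi
  · intro h
    have hcount : Nat.count p i = i := Nat.count_of_forall fun m hm => h m hm.le
    simpa [hcount] using Nat.nth_count (h i le_rfl)

theorem getD_map_val_sort_eq_iff {n : ℕ} (M : Finset (Fin n)) {i : ℕ} (hi : i < n) :
    ((M.sort (· ≤ ·)).map Fin.val).getD i n = i ↔ ∀ x : Fin n, (x : ℕ) ≤ i → x ∈ M := by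
  set S := M.map Fin.valEmbedding
  have hf : (Set.ofPred (· ∈ S)).Finite := S.finite_toSet
  have hS : hf.toFinset = S := S.finite_toSet_toFinset
  have hsort : (M.sort (· ≤ ·)).map Fin.val = S.sort (· ≤ ·) :=
    M.map_sort Fin.valEmbedding _ _ fun _ _ _ _ => Iff.rfl
  have hmem : ∀ x : Fin n, x ∈ M ↔ (x : ℕ) ∈ S := by simp [S, Fin.val_inj]
  rw [hsort]
  by_cases hiS : i < #S
  · rw [List.getD_eq_getElem _ _ (by simpa using hiS), ← List.getD_eq_getElem _ 0,
      ← hS, ← Nat.nth_eq_getD_sort hf, Nat.nth_eq_self_iff hf (by rwa [hS])]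
    constructor
    · intro h x hx
      exact (hmem x).mpr (h x hx)
    · intro h m hm
      simpa using (hmem ⟨m, by omega⟩).mp (h _ hm)
  · rw [List.getD_eq_default _ _ (by simpa using hiS)]
    refine iff_of_false hi.ne' fun h => hiS ?_
    have := Nat.count_le_card hf (i + 1)
    rw [hS, Nat.count_of_forall fun m hm => (hmem ⟨m, by omega⟩).mp (h _ (by simp; omega))] at this
    omega

theorem Finset.card_filter_product {α β : Type*} (s : Finset α) (t : Finset β)
    (P : α × β → Prop) [DecidablePred P] :
    #((s ×ˢ t).filter P) = ∑ a ∈ s, #(t.filter fun b => P (a, b)) := by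
  simp only [card_filter, sum_product]

namespace Equiv.Perm

/-- `σ ↦ (σ (last n), e)`, where `e` is `σ` with `last n` cut out of its cycle. -/
def decomposeLast (n : ℕ) : Perm (Fin (n + 1)) ≃ Fin (n + 1) × Perm (Fin n) :=
  ((permCongr finSuccEquivLast).trans decomposeOption).trans
    (prodCongr finSuccEquivLast.symm (Equiv.refl _))

variable {n : ℕ} {p : Fin (n + 1)} {e : Perm (Fin n)}

@[simp]
theorem decomposeLast_symm_apply_last : (decomposeLast n).symm (p, e) (Fin.last n) = p := by
  simp [decomposeLast, permCongr_apply]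

theorem decomposeLast_symm_apply_castSucc (x : Fin n) :
    (decomposeLast n).symm (p, e) x.castSucc =
      if (e x).castSucc = p then Fin.last n else (e x).castSucc := by
  induction p using Fin.lastCases with
  | last => simp [decomposeLast, permCongr_apply]
  | cast q =>
    by_cases h : e x = q
    · simp [decomposeLast, permCongr_apply, h]
    · simp [decomposeLast, permCongr_apply, h, swap_apply_of_ne_of_ne]

theorem sameCycle_decomposeLast_symm_castSucc_apply (x : Fin n) :
    ((decomposeLast n).symm (p, e)).SameCycle x.castSucc (e x).castSucc := by
  by_cases h : (e x).castSucc = p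
  · exact ⟨2, by simp [sq, decomposeLast_symm_apply_castSucc, h]⟩
  · exact ⟨1, by simp [decomposeLast_symm_apply_castSucc, h]⟩

theorem sameCycle_decomposeLast_symm_castSucc_iff {x y : Fin n} :
    ((decomposeLast n).symm (p, e)).SameCycle x.castSucc y.castSucc ↔ e.SameCycle x y := by
  set σ := (decomposeLast n).symm (p, e)
  constructor
  · intro h
    -- Along the `σ`-orbit of `x`, every point is in the `e`-cycle of `x`, or is `last n`
    -- entered from that cycle (so that it is left again into that cycle).
    have orbit : ∀ j : ℕ, (∃ y, e.SameCycle x y ∧ (σ ^ j) x.castSucc = y.castSucc) ∨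
        ((σ ^ j) x.castSucc = Fin.last n ∧ ∃ y, e.SameCycle x y ∧ (e y).castSucc = p) := by
      intro j
      induction j with
      | zero => exact .inl ⟨x, .refl _ _, rfl⟩
      | succ j ih =>
        rw [pow_succ', mul_apply]
        rcases ih with ⟨y, hxy, hy⟩ | ⟨hlast, y, hxy, hy⟩
        · rw [hy, decomposeLast_symm_apply_castSucc]
          split_ifs with hp
          · exact .inr ⟨rfl, y, hxy, hp⟩
          · exact .inl ⟨e y, hxy.apply_right, rfl⟩
        · rw [hlast, decomposeLast_symm_apply_last]
          exact .inl ⟨e y, hxy.apply_right, hy.symm⟩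
    obtain ⟨j, hj⟩ := h.exists_nat_pow_eq
    rcases orbit j with ⟨z, hxz, hz⟩ | ⟨hlast, -⟩
    · rwa [Fin.castSucc_inj.mp (hj.symm.trans hz)]
    · exact absurd (hj ▸ hlast) (Fin.castSucc_ne_last y)
  · intro h
    obtain ⟨i, rfl⟩ := h.exists_nat_pow_eq
    clear h
    induction i with
    | zero => exact .refl _ _
    | succ i ih =>
      rw [pow_succ', mul_apply]
      exact ih.trans (sameCycle_decomposeLast_symm_castSucc_apply _)

end Equiv.Perm

section DecomposeLast

variable {n : ℕ} {p : Fin (n + 1)} {e : Perm (Fin n)}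

theorem castSucc_mem_cycleMins_decomposeLast_symm {x : Fin n} :
    x.castSucc ∈ cycleMins (n + 1) ((decomposeLast n).symm (p, e)) ↔ x ∈ cycleMins n e := by
  simp only [cycleMins, mem_filter, mem_univ, true_and]
  constructor
  · intro h y hxy
    exact Fin.castSucc_le_castSucc_iff.mp
      (h _ (sameCycle_decomposeLast_symm_castSucc_iff.mpr hxy))
  · intro h z hxz
    induction z using Fin.lastCases with
    | last => exact Fin.le_last _
    | cast y =>
      exact Fin.castSucc_le_castSucc_iff.mpr
        (h y (sameCycle_decomposeLast_symm_castSucc_iff.mp hxz))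

theorem last_mem_cycleMins_decomposeLast_symm :
    Fin.last n ∈ cycleMins (n + 1) ((decomposeLast n).symm (p, e)) ↔ p = Fin.last n := by
  simp only [cycleMins, mem_filter, mem_univ, true_and]
  constructor
  · intro h
    exact Fin.last_le_iff.mp (h p ⟨1, by simp⟩)
  · rintro rfl z hz
    exact (hz.eq_of_left decomposeLast_symm_apply_last).le

theorem card_cycleMins_decomposeLast_symm :
    #(cycleMins (n + 1) ((decomposeLast n).symm (p, e))) =
      #(cycleMins n e) + if p = Fin.last n then 1 else 0 := by
  rw [← filter_univ_mem (cycleMins (n + 1) _), card_filter, Fin.sum_univ_castSucc]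
  simp only [castSucc_mem_cycleMins_decomposeLast_symm, last_mem_cycleMins_decomposeLast_symm]
  rw [← card_filter, filter_univ_mem]

end DecomposeLast

/-- Equivalently, the `ℓ`-th smallest cycle minimum is `ℓ - 1`: it is `ℓ` in the 1-based numbering
of the paper. -/
def IsLeader {n : ℕ} (ℓ : ℕ) (σ : Perm (Fin n)) : Prop :=
  ∀ x : Fin n, (x : ℕ) < ℓ → x ∈ cycleMins n σ

theorem isLeader_iff_getD_sort {n ℓ : ℕ} (h1 : 1 ≤ ℓ) (hℓ : ℓ ≤ n) (σ : Perm (Fin n)) :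
    IsLeader ℓ σ ↔
      (((cycleMins n σ).sort (· ≤ ·)).map Fin.val).getD (ℓ - 1) n + 1 = ℓ := by
  rw [show ∀ a, a + 1 = ℓ ↔ a = ℓ - 1 by omega, getD_map_val_sort_eq_iff _ (by omega)]
  exact forall_congr' fun x => imp_congr_left (by omega)

theorem isLeader_decomposeLast_symm_iff {n ℓ : ℕ} {p : Fin (n + 1)} {e : Perm (Fin n)}
    (hℓ : ℓ ≤ n) : IsLeader ℓ ((decomposeLast n).symm (p, e)) ↔ IsLeader ℓ e := by
  constructor
  · intro h x hx
    exact castSucc_mem_cycleMins_decomposeLast_symm.mp (h x.castSucc hx)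
  · intro h z hz
    induction z using Fin.lastCases with
    | last => exact absurd hz (by simp; omega)
    | cast y => exact castSucc_mem_cycleMins_decomposeLast_symm.mpr (h y hz)

theorem isLeader_self_iff {n : ℕ} {σ : Perm (Fin n)} : IsLeader n σ ↔ σ = 1 := by
  simp only [IsLeader, cycleMins, mem_filter, mem_univ, true_and]
  constructor
  · intro h
    ext x
    have hle : x ≤ σ x := h x x.isLt (σ x) ⟨1, rfl⟩
    have hge : σ x ≤ x := h (σ x) (σ x).isLt x ⟨-1, by simp⟩
    rw [le_antisymm hge hle, one_apply]
  · rintro rfl x - y hxy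
    exact (sameCycle_one.mp hxy).le

theorem card_cycleMins_one (n : ℕ) : #(cycleMins n 1) = n := by
  rw [eq_univ_of_forall fun x => isLeader_self_iff.mpr rfl x x.isLt, card_univ, Fintype.card_fin]

noncomputable def leaderCount (n k ℓ : ℕ) : ℕ :=
  #{σ : Perm (Fin n) | #(cycleMins n σ) = k ∧ IsLeader ℓ σ}

theorem leaderCount_zero {n ℓ : ℕ} (h0 : 0 < ℓ) (hℓ : ℓ ≤ n) : leaderCount n 0 ℓ = 0 := by
  refine card_eq_zero.mpr (filter_eq_empty_iff.mpr ?_)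
  rintro σ - ⟨hk, hσ⟩
  exact notMem_empty _ (card_eq_zero.mp hk ▸ hσ ⟨0, by omega⟩ h0)

theorem leaderCount_self (n k : ℕ) : leaderCount n k n = if n = k then 1 else 0 := by
  simp only [leaderCount, isLeader_self_iff, card_filter, ite_and]
  rw [Fintype.sum_eq_single 1 fun σ hσ => by simp [hσ], card_cycleMins_one, if_pos rfl]

theorem leaderCount_succ_succ {n k ℓ : ℕ} (hℓ : ℓ ≤ n) :
    leaderCount (n + 1) (k + 1) ℓ = leaderCount n k ℓ + n * leaderCount n (k + 1) ℓ := by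
  rw [leaderCount, ← card_map (decomposeLast n).toEmbedding, map_filter,
    univ_map_equiv_to_embedding, ← univ_product_univ, card_filter_product, Fin.sum_univ_castSucc]
  simp [card_cycleMins_decomposeLast_symm, isLeader_decomposeLast_symm_iff hℓ,
    Fin.castSucc_ne_last, leaderCount, add_comm]

theorem sum_leaderCount (n k : ℕ) : ∑ ℓ ∈ Icc 1 n, leaderCount n k ℓ = sodd n k := by
  induction n generalizing k with
  | zero => simp [sodd]
  | succ n ih =>
    cases k with
    | zero =>
      rw [sodd, ← ih, sum_eq_zero, sum_eq_zero, mul_zero] <;>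
        exact fun ℓ hℓ => leaderCount_zero (mem_Icc.mp hℓ).1 (mem_Icc.mp hℓ).2
    | succ k =>
      rw [sum_Icc_succ_top (by omega),
        sum_congr rfl fun ℓ hℓ => leaderCount_succ_succ (mem_Icc.mp hℓ).2, sum_add_distrib,
        ← mul_sum, ih, ih, leaderCount_self, sodd]
      simp

/-- s_odd(n,k) counts permutations with leader: pairs (ℓ, σ) where σ is a permutation of
{1,...,n} with exactly k cycles ordered by their minima, and ℓ ∈ {1,...,n} such that the
ℓ-th smallest cycle minimum equals ℓ.  (Fin n represents {1,...,n} via x ↦ x + 1.) -/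
theorem sodd_eq_permutations_with_leader (n k : ℕ) :
    Nat.card {p : ℕ × Equiv.Perm (Fin n) //
      1 ≤ p.1 ∧ p.1 ≤ n ∧ (cycleMins n p.2).card = k ∧
      (((cycleMins n p.2).sort (· ≤ ·)).map Fin.val).getD (p.1 - 1) n + 1 = p.1} =
    sodd n k := by
  have hcond : ∀ q : ℕ × Perm (Fin n),
      (1 ≤ q.1 ∧ q.1 ≤ n ∧ #(cycleMins n q.2) = k ∧
        (((cycleMins n q.2).sort (· ≤ ·)).map Fin.val).getD (q.1 - 1) n + 1 = q.1) ↔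
      q ∈ (Icc 1 n ×ˢ univ).filter fun q => #(cycleMins n q.2) = k ∧ IsLeader q.1 q.2 := by
    rintro ⟨ℓ, σ⟩
    simp only [mem_filter, mem_product, mem_Icc, mem_univ, and_true, and_assoc]
    exact and_congr_right fun h1 => and_congr_right fun hℓ => and_congr_right fun _ =>
      (isLeader_iff_getD_sort h1 hℓ σ).symm
  rw [Nat.card_congr (Equiv.subtypeEquivRight hcond), Nat.card_eq_fintype_card,
    Fintype.card_coe, card_filter_product, ← sum_leaderCount]
  rfl
end

section
/- S_odd(n, k) = Σ_{r=1}^{k} S_r(n, k), where S_r(n,k) is the r-Stirling number of the second kind counting partitions of {1,...,n} into k blocks such that 1, 2, ..., r lie in distinct blocks. -/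
/-- The r-Stirling number of the second kind: the number of partitions of {1,...,n}
into k nonempty blocks such that 1, 2, ..., r lie in distinct blocks. -/
noncomputable def rStirling2 (r n k : ℕ) : ℕ :=
  Nat.card {π : Finpartition (Finset.Icc 1 n) //
    π.parts.card = k ∧ ∀ B ∈ π.parts, (B ∩ Finset.Icc 1 r).card ≤ 1}

open Finset

namespace Finpartition

section GeneralizedBooleanAlgebra

variable {α : Type*} [GeneralizedBooleanAlgebra α] [DecidableEq α] {a b : α}

lemma sup_erase_parts (P : Finpartition a) (hb : b ∈ P.parts) :
    (P.parts.erase b).sup id = a \ b := by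
  have hdisj : Disjoint b ((P.parts.erase b).sup id) :=
    P.supIndep (erase_subset b P.parts) hb (notMem_erase b P.parts)
  have hsup := P.sup_parts
  rw [← insert_erase hb, sup_insert, id] at hsup
  conv_rhs => rw [← hsup]
  exact hdisj.sup_sdiff_cancel_left.symm

end GeneralizedBooleanAlgebra

variable {α : Type*} [DecidableEq α] {a : α} {s t B I : Finset α}

lemma notMem_of_mem_parts (P : Finpartition t) (ha : a ∉ t) (hB : B ∈ P.parts) : a ∉ B :=
  fun h => ha (P.le hB h)

def addSingleton (P : Finpartition t) (ha : a ∉ t) : Finpartition (insert a t) :=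
  P.extend (singleton_ne_empty a) (disjoint_singleton_right.2 ha) (union_singleton a t)

lemma addSingleton_parts (P : Finpartition t) (ha : a ∉ t) :
    (P.addSingleton ha).parts = insert {a} P.parts := rfl

def insertInto (P : Finpartition t) (ha : a ∉ t) (hB : B ∈ P.parts) :
    Finpartition (insert a t) :=
  (P.ofSubset (erase_subset B P.parts) (P.sup_erase_parts hB)).extend (insert_ne_empty a B)
    (disjoint_insert_right.2 ⟨fun h => ha (mem_sdiff.1 h).1, sdiff_disjoint⟩)
    (by rw [sup_eq_union, union_insert, sdiff_union_of_subset (P.le hB)])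

lemma insertInto_parts (P : Finpartition t) (ha : a ∉ t) (hB : B ∈ P.parts) :
    (P.insertInto ha hB).parts = insert (insert a B) (P.parts.erase B) := rfl

def removeElem (P : Finpartition (insert a t)) (ha : a ∉ t) : Finpartition t :=
  (P.avoid {a}).copy (by grind)

lemma removeElem_parts (P : Finpartition (insert a t)) (ha : a ∉ t) :
    (P.removeElem ha).parts = (P.parts.image (·.erase a)).erase ∅ := by
  simp [removeElem, avoid, sdiff_singleton_eq_erase]

lemma image_erase_parts (P : Finpartition s) (ha : a ∈ s) :
    P.parts.image (·.erase a) = insert ((P.part a).erase a) (P.parts.erase (P.part a)) := by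
  have hpart : P.part a ∈ P.parts := P.part_mem.2 ha
  conv_lhs => rw [← insert_erase hpart]
  rw [image_insert]
  congr 1
  refine (image_congr fun C hC => erase_eq_of_notMem fun haC => ?_).trans image_id
  exact (mem_erase.1 hC).1 (P.part_eq_of_mem (mem_erase.1 hC).2 haC).symm

lemma erase_part_nonempty (P : Finpartition s) (ha : a ∈ s) (h : {a} ∉ P.parts) :
    ((P.part a).erase a).Nonempty := by
  have hpart : P.part a ∈ P.parts := P.part_mem.2 ha
  rw [nonempty_iff_ne_empty, Ne, erase_eq_empty_iff]
  rintro (he | he)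
  · exact P.empty_notMem_parts (he ▸ hpart)
  · exact h (he ▸ hpart)

lemma erase_part_notMem_parts (P : Finpartition s) (ha : a ∈ s) (h : {a} ∉ P.parts) :
    (P.part a).erase a ∉ P.parts := by
  intro hmem
  obtain ⟨x, hx⟩ := P.erase_part_nonempty ha h
  have := P.eq_of_mem_parts hmem (P.part_mem.2 ha) hx (mem_of_mem_erase hx)
  exact notMem_erase a _ (this ▸ P.mem_part ha)

lemma removeElem_parts_of_singleton_mem (P : Finpartition (insert a t)) (ha : a ∉ t)
    (h : {a} ∈ P.parts) : (P.removeElem ha).parts = P.parts.erase {a} := by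
  rw [removeElem_parts, P.image_erase_parts (mem_insert_self a t), P.part_eq_of_mem h (mem_singleton_self a),
    erase_singleton, erase_insert fun h' => P.empty_notMem_parts (mem_of_mem_erase h')]

lemma removeElem_parts_of_singleton_notMem (P : Finpartition (insert a t)) (ha : a ∉ t)
    (h : {a} ∉ P.parts) :
    (P.removeElem ha).parts = insert ((P.part a).erase a) (P.parts.erase (P.part a)) := by
  rw [removeElem_parts, P.image_erase_parts (mem_insert_self a t), erase_eq_of_notMem]
  rw [mem_insert, not_or]
  exact ⟨(P.erase_part_nonempty (mem_insert_self a t) h).ne_empty.symm,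
    fun h' => P.empty_notMem_parts (mem_of_mem_erase h')⟩

lemma singleton_mem_addSingleton_parts (P : Finpartition t) (ha : a ∉ t) :
    {a} ∈ (P.addSingleton ha).parts := mem_insert_self _ _

lemma singleton_notMem_insertInto_parts (P : Finpartition t) (ha : a ∉ t) (hB : B ∈ P.parts) :
    {a} ∉ (P.insertInto ha hB).parts := by
  rw [insertInto_parts, mem_insert, not_or]
  refine ⟨fun h => ?_, fun h => P.notMem_of_mem_parts ha (mem_of_mem_erase h) (mem_singleton_self a)⟩
  obtain ⟨x, hx⟩ := P.nonempty_of_mem_parts hB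
  have : x = a := mem_singleton.1 (h ▸ mem_insert_of_mem hx)
  exact P.notMem_of_mem_parts ha hB (this ▸ hx)

lemma part_insertInto (P : Finpartition t) (ha : a ∉ t) (hB : B ∈ P.parts) :
    (P.insertInto ha hB).part a = insert a B :=
  part_eq_of_mem _ (mem_insert_self _ _) (mem_insert_self a B)

lemma removeElem_addSingleton (P : Finpartition t) (ha : a ∉ t) :
    (P.addSingleton ha).removeElem ha = P := by
  ext1
  rw [removeElem_parts_of_singleton_mem _ _ (P.singleton_mem_addSingleton_parts ha),
    addSingleton_parts, erase_insert fun h => P.notMem_of_mem_parts ha h (mem_singleton_self a)]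

lemma removeElem_insertInto (P : Finpartition t) (ha : a ∉ t) (hB : B ∈ P.parts) :
    (P.insertInto ha hB).removeElem ha = P := by
  ext1
  rw [removeElem_parts_of_singleton_notMem _ _ (P.singleton_notMem_insertInto_parts ha hB),
    part_insertInto, erase_insert (P.notMem_of_mem_parts ha hB), insertInto_parts,
    erase_insert fun h => P.notMem_of_mem_parts ha (mem_of_mem_erase h) (mem_insert_self a B),
    insert_erase hB]

lemma addSingleton_removeElem (P : Finpartition (insert a t)) (ha : a ∉ t) (h : {a} ∈ P.parts) :
    (P.removeElem ha).addSingleton ha = P := by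
  ext1
  rw [addSingleton_parts, removeElem_parts_of_singleton_mem _ _ h, insert_erase h]

lemma erase_part_mem_removeElem_parts (P : Finpartition (insert a t)) (ha : a ∉ t)
    (h : {a} ∉ P.parts) : (P.part a).erase a ∈ (P.removeElem ha).parts := by
  rw [removeElem_parts_of_singleton_notMem _ _ h]
  exact mem_insert_self _ _

lemma insertInto_removeElem (P : Finpartition (insert a t)) (ha : a ∉ t) (h : {a} ∉ P.parts) :
    (P.removeElem ha).insertInto ha (P.erase_part_mem_removeElem_parts ha h) = P := by
  ext1
  rw [insertInto_parts, insert_erase (P.mem_part (mem_insert_self a t)),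
    removeElem_parts_of_singleton_notMem _ _ h, erase_insert (fun h' =>
      P.erase_part_notMem_parts (mem_insert_self a t) h (mem_of_mem_erase h')),
    insert_erase (P.part_mem.2 (mem_insert_self a t))]

def insertEquiv (ha : a ∉ t) :
    Finpartition (insert a t) ≃ Finpartition t ⊕ Σ P : Finpartition t, P.parts where
  toFun P :=
    if h : {a} ∈ P.parts then .inl (P.removeElem ha)
    else .inr ⟨P.removeElem ha, _, P.erase_part_mem_removeElem_parts ha h⟩
  invFun := Sum.elim (·.addSingleton ha) fun x => x.1.insertInto ha x.2.2
  left_inv P := by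
    by_cases h : {a} ∈ P.parts
    · simp [h, addSingleton_removeElem]
    · simp [h, insertInto_removeElem]
  right_inv := by
    rintro (P | ⟨P, B, hB⟩)
    · simp [singleton_mem_addSingleton_parts, removeElem_addSingleton]
    · dsimp only [Sum.elim_inr]
      rw [dif_neg (P.singleton_notMem_insertInto_parts ha hB)]
      refine congrArg Sum.inr (Sigma.subtype_ext ?_ ?_)
      · exact removeElem_insertInto P ha hB
      · exact (congrArg (·.erase a) (P.part_insertInto ha hB)).trans
          (erase_insert (P.notMem_of_mem_parts ha hB))

lemma card_addSingleton (P : Finpartition t) (ha : a ∉ t) :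
    #(P.addSingleton ha).parts = #P.parts + 1 :=
  P.card_extend _ _

lemma card_insertInto (P : Finpartition t) (ha : a ∉ t) (hB : B ∈ P.parts) :
    #(P.insertInto ha hB).parts = #P.parts := by
  rw [insertInto, card_extend, ofSubset_parts, card_erase_add_one hB]

def Separates (P : Finpartition s) (I : Finset α) : Prop :=
  ∀ B ∈ P.parts, #(B ∩ I) ≤ 1

lemma separates_addSingleton_iff (P : Finpartition t) (ha : a ∉ t) (haI : a ∉ I) :
    (P.addSingleton ha).Separates I ↔ P.Separates I := by
  simp [Separates, addSingleton_parts, singleton_inter_of_notMem haI]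

lemma separates_insertInto_iff (P : Finpartition t) (ha : a ∉ t) (haI : a ∉ I)
    (hB : B ∈ P.parts) : (P.insertInto ha hB).Separates I ↔ P.Separates I := by
  rw [Separates, Separates, insertInto_parts, forall_mem_insert, insert_inter_of_notMem haI]
  conv_rhs => rw [← insert_erase hB, forall_mem_insert]

theorem card_separates_insert (ha : a ∉ t) (haI : a ∉ I) (k : ℕ) :
    Nat.card {P : Finpartition (insert a t) // #P.parts = k + 1 ∧ P.Separates I} =
      Nat.card {P : Finpartition t // #P.parts = k ∧ P.Separates I} +
        (k + 1) * Nat.card {P : Finpartition t // #P.parts = k + 1 ∧ P.Separates I} := by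
  classical
  let p : Finpartition t ⊕ (Σ P : Finpartition t, P.parts) → Prop :=
    Sum.elim (fun P => #P.parts = k ∧ P.Separates I)
      (fun x => #x.1.parts = k + 1 ∧ x.1.Separates I)
  have e : {x // p x} ≃ {P : Finpartition (insert a t) // #P.parts = k + 1 ∧ P.Separates I} :=
    (insertEquiv ha).symm.subtypeEquiv <| by
      rintro (P | ⟨P, B, hB⟩)
      · simp [p, insertEquiv, card_addSingleton, separates_addSingleton_iff _ _ haI]
      · simp [p, insertEquiv, card_insertInto, separates_insertInto_iff _ _ haI]
  rw [← Nat.card_congr e, Nat.card_congr Equiv.subtypeSum, Nat.card_sum]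
  simp only [p, Sum.elim_inl, Sum.elim_inr]
  rw [Nat.card_congr (Equiv.subtypeSigmaEquiv (fun P : Finpartition t => P.parts)
    (fun P => #P.parts = k + 1 ∧ P.Separates I)), Nat.card_sigma]
  simp only [Nat.card_eq_fintype_card, Fintype.card_coe, Nat.add_left_cancel_iff]
  rw [sum_congr rfl fun x _ => x.2.1, sum_const, card_univ, smul_eq_mul, mul_comm]

lemma eq_bot_of_card_parts_eq (P : Finpartition s) (h : #P.parts = #s) : P = ⊥ := by
  have hone : ∀ B ∈ P.parts, 1 = #B := by
    refine (sum_eq_sum_iff_of_le fun B hB => (P.nonempty_of_mem_parts hB).card_pos).1 ?_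
    rw [sum_const, smul_eq_mul, mul_one, h, P.sum_card_parts]
  ext B
  rw [mem_bot_iff]
  constructor
  · intro hB
    obtain ⟨x, rfl⟩ := card_eq_one.1 (hone B hB).symm
    exact ⟨x, P.le hB (mem_singleton_self x), rfl⟩
  · rintro ⟨x, hx, rfl⟩
    obtain ⟨y, hy⟩ := card_eq_one.1 (hone _ (P.part_mem.2 hx)).symm
    obtain rfl : x = y := mem_singleton.1 (hy ▸ P.mem_part hx)
    exact hy ▸ P.part_mem.2 hx

lemma bot_separates : (⊥ : Finpartition s).Separates I := by
  intro B hB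
  obtain ⟨x, -, rfl⟩ := mem_bot_iff.1 hB
  exact (card_le_card inter_subset_left).trans (card_singleton x).le

lemma Separates.card_le_card_parts {P : Finpartition s} (h : P.Separates I) (hI : I ⊆ s) :
    #I ≤ #P.parts := by
  refine card_le_card_of_injOn P.part (fun x hx => P.part_mem.2 (hI hx)) fun x hx y hy hxy => ?_
  refine card_le_one.1 (h _ (P.part_mem.2 (hI hx))) x ?_ y ?_
  · exact mem_inter.2 ⟨P.mem_part (hI hx), hx⟩
  · exact mem_inter.2 ⟨hxy ▸ P.mem_part (hI hy), hy⟩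

end Finpartition

lemma rStirling2_succ_succ {r n : ℕ} (hr : r ≤ n) (k : ℕ) :
    rStirling2 r (n + 1) (k + 1) = rStirling2 r n k + (k + 1) * rStirling2 r n (k + 1) := by
  rw [rStirling2, ← insert_Icc_right_eq_Icc_add_one (by omega)]
  exact Finpartition.card_separates_insert (by simp) (by simp only [mem_Icc]; omega) k

lemma rStirling2_eq_zero_of_lt {n k : ℕ} (h : n < k) (r : ℕ) : rStirling2 r n k = 0 := by
  rw [rStirling2, Nat.card_eq_zero]
  refine .inl ⟨fun ⟨P, hP, _⟩ => ?_⟩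
  have := P.card_parts_le_card
  simp only [Nat.card_Icc] at this
  omega

lemma rStirling2_eq_zero_of_lt_of_le {r n k : ℕ} (hkr : k < r) (hrn : r ≤ n) :
    rStirling2 r n k = 0 := by
  rw [rStirling2, Nat.card_eq_zero]
  refine .inl ⟨fun ⟨P, hP, hsep⟩ => ?_⟩
  have := Finpartition.Separates.card_le_card_parts hsep (Icc_subset_Icc le_rfl hrn)
  simp only [Nat.card_Icc] at this
  omega

lemma rStirling2_self (r n : ℕ) : rStirling2 r n n = 1 := by
  rw [rStirling2, Nat.card_eq_one_iff_unique]
  have hcard : #(Icc 1 n) = n := by simp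
  refine ⟨⟨fun ⟨P, hP, _⟩ ⟨Q, hQ, _⟩ => ?_⟩, ⟨⟨⊥, ?_, Finpartition.bot_separates⟩⟩⟩
  · exact Subtype.ext <| (P.eq_bot_of_card_parts_eq (hP.trans hcard.symm)).trans
      (Q.eq_bot_of_card_parts_eq (hQ.trans hcard.symm)).symm
  · rw [Finpartition.card_bot, hcard]

lemma sum_rStirling2_succ_succ (n k : ℕ) :
    ∑ r ∈ Icc 1 (k + 1), rStirling2 r (n + 1) (k + 1) =
      ∑ r ∈ Icc 1 k, rStirling2 r n k + (k + 1) * ∑ r ∈ Icc 1 (k + 1), rStirling2 r n (k + 1) +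
        if n = k then 1 else 0 := by
  rcases lt_trichotomy k n with hkn | rfl | hnk
  · rw [sum_congr rfl fun r hr => rStirling2_succ_succ (by grind) k, sum_add_distrib,
      ← mul_sum, sum_Icc_succ_top (by omega), rStirling2_eq_zero_of_lt_of_le (by omega) hkn,
      if_neg (by omega), add_zero, add_zero]
  · simp [rStirling2_self, rStirling2_eq_zero_of_lt k.lt_succ_self]
  · simp (disch := omega) [rStirling2_eq_zero_of_lt, hnk.ne]

/-- S_odd(n,k) = ∑_{r=1}^{k} S_r(n,k) where S_r is the r-Stirling number of the
second kind. -/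
theorem Sodd_eq_sum_rStirling (n k : ℕ) :
    Sodd n k = ∑ r ∈ Finset.Icc 1 k, rStirling2 r n k := by
  induction n generalizing k with
  | zero =>
    exact (sum_eq_zero fun r hr => rStirling2_eq_zero_of_lt (by grind) r).symm
  | succ n ih =>
    cases k with
    | zero => rfl
    | succ k => rw [Sodd, ih, ih, sum_rStirling2_succ_succ]
end
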